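/- arXiv:1206.5343 — 2 statements merged into one kernel-verified Lean document; each statement's English description precedes it below -/
import Mathlib

section
/- For any nonnegative weight function φ on transpositions, the weighted transposition distance satisfies (1/2) D(π,σ) ≤ d_φ(π,σ) ≤ 2 D(π,σ), where D(π,σ) = ∑_{i=1}^n weight(p*(π⁻¹(i), σ⁻¹(i))) and p*(a,b) is the shortest path between a and b in the complete graph on [n] with edge weights φ(i,j). -/
/-- The weighted transposition distance: minimum total weight of a sequence of
transpositions transforming `σ` into `π`, with weight `φ a b` for the transposition `(a b)`. -/
noncomputable def wtd {n : ℕ} (φ : Fin n → Fin n → ℝ) (π σ : Equiv.Perm (Fin n)) : ℝ :=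
  sInf {c | ∃ L : List (Fin n × Fin n), (∀ p ∈ L, p.1 ≠ p.2) ∧
    σ * (L.map fun p => Equiv.swap p.1 p.2).prod = π ∧
    c = (L.map fun p => φ p.1 p.2).sum}


/-- Shortest-path distance between `a` and `b` in the complete graph on `[n]`
with edge weights `φ` (zero if `a = b`, via the empty path). -/
noncomputable def eta {n : ℕ} (φ : Fin n → Fin n → ℝ) (a b : Fin n) : ℝ :=
  sInf {c | ∃ L : List (Fin n), (a :: L).getLast (by simp) = b ∧
    c = (((a :: L).zip L).map fun p => φ p.1 p.2).sum}

/-!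
Both bounds compare a sequence of transpositions with the footrule
`D(τ) = ∑ j, η(j, τ j)` of `τ = σ⁻¹ π`, where `η` is the shortest-path distance.

Lower bound: a transposition `(a b)` moves only two entries of `τ`, each along the edge `ab`, so by
the triangle inequality for `η` it changes `D` by at most `2 φ(a, b)`.

Upper bound: the transposition `(a b)` is realised at cost at most `2 η(a, b)` by conjugating
along a shortest path from `a` to `b`. Peeling `(a, τ a)` off the cycle of `τ` through `a` and
inducting on the support gives the sharper bound `d(τ) ≤ 2 D(τ) - 2 η(τ⁻¹ a, a)`: the edge into
`a` is never paid for.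
-/

open Equiv Finset

variable {n : ℕ} {φ : Fin n → Fin n → ℝ}

def pathWeight (φ : Fin n → Fin n → ℝ) (a : Fin n) (L : List (Fin n)) : ℝ :=
  (((a :: L).zip L).map fun p => φ p.1 p.2).sum

def swapProd (L : List (Fin n × Fin n)) : Perm (Fin n) :=
  (L.map fun p => swap p.1 p.2).prod

def swapCost (φ : Fin n → Fin n → ℝ) (L : List (Fin n × Fin n)) : ℝ :=
  (L.map fun p => φ p.1 p.2).sum

@[simp]
lemma swapProd_nil : swapProd ([] : List (Fin n × Fin n)) = 1 := rfl

@[simp]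
lemma swapProd_cons (p : Fin n × Fin n) (L : List (Fin n × Fin n)) :
    swapProd (p :: L) = swap p.1 p.2 * swapProd L := List.prod_cons

@[simp]
lemma swapProd_append (L M : List (Fin n × Fin n)) :
    swapProd (L ++ M) = swapProd L * swapProd M := by
  simp [swapProd]

@[simp]
lemma swapCost_nil : swapCost φ [] = 0 := rfl

@[simp]
lemma swapCost_cons (p : Fin n × Fin n) (L : List (Fin n × Fin n)) :
    swapCost φ (p :: L) = φ p.1 p.2 + swapCost φ L := List.sum_cons

@[simp]
lemma swapCost_append (L M : List (Fin n × Fin n)) :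
    swapCost φ (L ++ M) = swapCost φ L + swapCost φ M := by
  simp [swapCost]

lemma swapCost_nonneg (hφ : ∀ a b, 0 ≤ φ a b) (L : List (Fin n × Fin n)) :
    0 ≤ swapCost φ L :=
  List.sum_nonneg fun _ hx => by
    obtain ⟨p, -, rfl⟩ := List.mem_map.1 hx
    exact hφ _ _

@[simp]
lemma pathWeight_nil (a : Fin n) : pathWeight φ a [] = 0 := rfl

@[simp]
lemma pathWeight_cons (a v : Fin n) (L : List (Fin n)) :
    pathWeight φ a (v :: L) = φ a v + pathWeight φ v L := rfl

lemma pathWeight_nonneg (hφ : ∀ a b, 0 ≤ φ a b) (a : Fin n) (L : List (Fin n)) :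
    0 ≤ pathWeight φ a L :=
  List.sum_nonneg fun _ hx => by
    obtain ⟨p, -, rfl⟩ := List.mem_map.1 hx
    exact hφ _ _

lemma pathWeight_append_singleton (a b : Fin n) (L : List (Fin n)) :
    pathWeight φ a (L ++ [b]) = pathWeight φ a L + φ ((a :: L).getLast (by simp)) b := by
  induction L generalizing a with
  | nil => simp
  | cons v L ih => simp [ih, add_assoc]

lemma eta_le_pathWeight (hφ : ∀ a b, 0 ≤ φ a b) {a b : Fin n} {L : List (Fin n)}
    (h : (a :: L).getLast (by simp) = b) : eta φ a b ≤ pathWeight φ a L :=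
  csInf_le ⟨0, by rintro _ ⟨L, -, rfl⟩; exact pathWeight_nonneg hφ a L⟩ ⟨L, h, rfl⟩

lemma le_eta {a b : Fin n} {c : ℝ}
    (h : ∀ L : List (Fin n), (a :: L).getLast (by simp) = b → c ≤ pathWeight φ a L) :
    c ≤ eta φ a b :=
  le_csInf ⟨_, [b], rfl, rfl⟩ fun _ ⟨L, hL, hc⟩ => hc ▸ h L hL

lemma eta_nonneg (hφ : ∀ a b, 0 ≤ φ a b) (a b : Fin n) : 0 ≤ eta φ a b :=
  le_eta fun L _ => pathWeight_nonneg hφ a L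

@[simp]
lemma eta_self (hφ : ∀ a b, 0 ≤ φ a b) (a : Fin n) : eta φ a a = 0 :=
  le_antisymm (eta_le_pathWeight hφ (L := []) rfl) (eta_nonneg hφ a a)

lemma eta_le_eta_add (hφ : ∀ a b, 0 ≤ φ a b) (x a b : Fin n) :
    eta φ x b ≤ eta φ x a + φ a b := by
  suffices eta φ x b - φ a b ≤ eta φ x a by linarith
  refine le_eta fun L hL => ?_
  have := eta_le_pathWeight hφ (a := x) (L := L ++ [b]) (b := b) (by simp)
  rw [pathWeight_append_singleton, hL] at this
  linarith

lemma eta_swap_apply_le (hφ : ∀ a b, 0 ≤ φ a b) (hφsymm : ∀ a b, φ a b = φ b a)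
    (x a b y : Fin n) : eta φ x (swap a b y) ≤ eta φ x y + φ a b := by
  rcases eq_or_ne y a with rfl | hya
  · simpa using eta_le_eta_add hφ x y b
  rcases eq_or_ne y b with rfl | hyb
  · simpa [hφsymm a y] using eta_le_eta_add hφ x y a
  · simpa [swap_apply_of_ne_of_ne hya hyb] using hφ a b

lemma wtd_le (hφ : ∀ a b, 0 ≤ φ a b) {π σ : Perm (Fin n)} {L : List (Fin n × Fin n)}
    (hL : ∀ p ∈ L, p.1 ≠ p.2) (h : σ * swapProd L = π) : wtd φ π σ ≤ swapCost φ L := by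
  refine csInf_le ⟨0, ?_⟩ ⟨L, hL, h, rfl⟩
  rintro _ ⟨L', -, -, rfl⟩
  exact swapCost_nonneg hφ L'

lemma wtd_self_nonpos (hφ : ∀ a b, 0 ≤ φ a b) (π : Perm (Fin n)) : wtd φ π π ≤ 0 :=
  wtd_le hφ (L := []) (by simp) (mul_one π)

lemma exists_swapProd_eq (τ : Perm (Fin n)) :
    ∃ L : List (Fin n × Fin n), (∀ p ∈ L, p.1 ≠ p.2) ∧ swapProd L = τ := by
  induction τ using Perm.swap_induction_on with
  | one => exact ⟨[], by simp, swapProd_nil⟩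
  | swap_mul τ x y hxy ih =>
    obtain ⟨L, hL, rfl⟩ := ih
    refine ⟨(x, y) :: L, ?_, swapProd_cons _ L⟩
    simpa [hxy] using hL

lemma le_wtd {π σ : Perm (Fin n)} {c : ℝ}
    (h : ∀ L : List (Fin n × Fin n), (∀ p ∈ L, p.1 ≠ p.2) → σ * swapProd L = π →
      c ≤ swapCost φ L) :
    c ≤ wtd φ π σ := by
  obtain ⟨L, hL, hprod⟩ := exists_swapProd_eq (σ⁻¹ * π)
  refine le_csInf ⟨_, L, hL, ?_, rfl⟩ fun _ ⟨L, hL, hπ, hc⟩ => hc ▸ h L hL hπ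
  change σ * swapProd L = π
  rw [hprod, mul_inv_cancel_left]

lemma wtd_eq_wtd_one (π σ : Perm (Fin n)) : wtd φ π σ = wtd φ (σ⁻¹ * π) 1 := by
  simp only [wtd, one_mul, eq_inv_mul_iff_mul_eq]

lemma wtd_one_mul_le (hφ : ∀ a b, 0 ≤ φ a b) (f g : Perm (Fin n)) :
    wtd φ (f * g) 1 ≤ wtd φ f 1 + wtd φ g 1 := by
  suffices wtd φ (f * g) 1 - wtd φ g 1 ≤ wtd φ f 1 by linarith
  refine le_wtd fun L hL hf => ?_
  suffices wtd φ (f * g) 1 - swapCost φ L ≤ wtd φ g 1 by linarith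
  refine le_wtd fun M hM hg => ?_
  have hLM : ∀ p ∈ L ++ M, p.1 ≠ p.2 := fun p hp => (List.mem_append.1 hp).elim (hL p) (hM p)
  rw [one_mul] at hf hg
  have := wtd_le hφ (π := f * g) (σ := 1) hLM (by rw [one_mul, swapProd_append, hf, hg])
  rw [swapCost_append] at this
  linarith

lemma wtd_one_swap_le (hφ : ∀ a b, 0 ≤ φ a b) (a b : Fin n) :
    wtd φ (swap a b) 1 ≤ φ a b := by
  rcases eq_or_ne a b with rfl | hab
  · rw [swap_self, ← Perm.one_def]
    exact (wtd_self_nonpos hφ 1).trans (hφ a a)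
  · simpa using wtd_le hφ (π := swap a b) (σ := 1) (L := [(a, b)]) (by simpa using hab) (by simp)

lemma wtd_one_swap_le_pathWeight (hφ : ∀ a b, 0 ≤ φ a b) {a b : Fin n} (hab : a ≠ b)
    {L : List (Fin n)} (hL : (a :: L).getLast (by simp) = b) :
    wtd φ (swap a b) 1 ≤ 2 * pathWeight φ a L := by
  induction L generalizing a with
  | nil => exact absurd hL hab
  | cons v L ih =>
    have hvL : (v :: L).getLast (by simp) = b := by rwa [List.getLast_cons (by simp)] at hL
    have hrest := pathWeight_nonneg hφ v L
    rw [pathWeight_cons]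
    rcases eq_or_ne v b with rfl | hvb
    · linarith [wtd_one_swap_le hφ a v, hφ a v]
    -- also valid when `v = a`, since then `swap a v = 1`
    have hconj : swap a v * swap v b * swap a v = swap a b := by
      simpa only [swap_comm] using swap_mul_swap_mul_swap hvb.symm hab.symm
    have h₁ := wtd_one_mul_le hφ (swap a v * swap v b) (swap a v)
    have h₂ := wtd_one_mul_le hφ (swap a v) (swap v b)
    have h₃ := wtd_one_swap_le hφ a v
    rw [hconj] at h₁
    linarith [ih hvb hvL]

lemma wtd_one_swap_le_eta (hφ : ∀ a b, 0 ≤ φ a b) {a b : Fin n} (hab : a ≠ b) :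
    wtd φ (swap a b) 1 ≤ 2 * eta φ a b := by
  suffices wtd φ (swap a b) 1 / 2 ≤ eta φ a b by linarith
  exact le_eta fun L hL => by linarith [wtd_one_swap_le_pathWeight hφ hab hL]

lemma sum_sub_sum_eq_of_eqOn_compl {ι β : Type*} [Fintype ι] [AddCommGroup β] {f g : ι → β}
    {s : Finset ι} (h : Set.EqOn f g (↑s)ᶜ) : ∑ j, f j - ∑ j, g j = ∑ j ∈ s, (f j - g j) := by
  rw [← sum_sub_distrib]
  exact (sum_subset (subset_univ s) fun j _ hj => sub_eq_zero.2 (h hj)).symm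

noncomputable def footrule (φ : Fin n → Fin n → ℝ) (τ : Perm (Fin n)) : ℝ :=
  ∑ j, eta φ j (τ j)

@[simp]
lemma footrule_one (hφ : ∀ a b, 0 ≤ φ a b) : footrule φ 1 = 0 := by
  simp [footrule, eta_self hφ]

lemma sum_eta_inv_eq_footrule (π σ : Perm (Fin n)) :
    ∑ i, eta φ (π⁻¹ i) (σ⁻¹ i) = footrule φ (σ⁻¹ * π) := by
  rw [footrule, ← Equiv.sum_comp π]
  simp

lemma footrule_swap_mul_le (hφ : ∀ a b, 0 ≤ φ a b) (hφsymm : ∀ a b, φ a b = φ b a)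
    (a b : Fin n) (τ : Perm (Fin n)) :
    footrule φ (swap a b * τ) ≤ footrule φ τ + 2 * φ a b := by
  have hdiff := sum_sub_sum_eq_of_eqOn_compl (s := {τ⁻¹ a, τ⁻¹ b})
    (f := fun j => eta φ j (swap a b (τ j))) (g := fun j => eta φ j (τ j)) fun j hj => by
      simp only [coe_insert, coe_singleton, Set.mem_compl_iff, Set.mem_insert_iff,
        Set.mem_singleton_iff, not_or, Perm.eq_inv_iff_eq] at hj
      simp only [swap_apply_of_ne_of_ne hj.1 hj.2]
  have hbound : ∑ j ∈ {τ⁻¹ a, τ⁻¹ b}, (eta φ j (swap a b (τ j)) - eta φ j (τ j)) ≤ 2 * φ a b :=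
    calc _ ≤ ∑ j ∈ {τ⁻¹ a, τ⁻¹ b}, φ a b :=
          sum_le_sum fun j _ => by linarith [eta_swap_apply_le hφ hφsymm j a b (τ j)]
      _ ≤ 2 * φ a b := by
          rw [sum_const, nsmul_eq_mul]
          gcongr
          · exact hφ a b
          · exact_mod_cast card_le_two
  simp only [footrule, Perm.mul_apply]
  linarith

lemma footrule_swapProd_le (hφ : ∀ a b, 0 ≤ φ a b) (hφsymm : ∀ a b, φ a b = φ b a)
    (L : List (Fin n × Fin n)) : footrule φ (swapProd L) ≤ 2 * swapCost φ L := by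
  induction L with
  | nil => simp [hφ]
  | cons p L ih =>
    rw [swapProd_cons, swapCost_cons]
    linarith [footrule_swap_mul_le hφ hφsymm p.1 p.2 (swapProd L)]

lemma one_half_mul_footrule_le_wtd (hφ : ∀ a b, 0 ≤ φ a b) (hφsymm : ∀ a b, φ a b = φ b a)
    (τ : Perm (Fin n)) : 1 / 2 * footrule φ τ ≤ wtd φ τ 1 :=
  le_wtd fun L _ hL => by
    rw [one_mul] at hL
    subst hL
    linarith [footrule_swapProd_le hφ hφsymm L]

lemma footrule_eq_footrule_swap_mul_add (hφ : ∀ a b, 0 ≤ φ a b) {τ : Perm (Fin n)} {a : Fin n}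
    (ha : τ a ≠ a) :
    footrule φ τ = footrule φ (swap a (τ a) * τ) + eta φ a (τ a) + eta φ (τ⁻¹ a) a
      - eta φ (τ⁻¹ a) (τ a) := by
  have hca : τ⁻¹ a ≠ a := fun h => ha (by simpa using congrArg τ h.symm)
  have hdiff := sum_sub_sum_eq_of_eqOn_compl (s := {a, τ⁻¹ a})
    (f := fun j => eta φ j (τ j)) (g := fun j => eta φ j (swap a (τ a) (τ j))) fun j hj => by
      simp only [coe_insert, coe_singleton, Set.mem_compl_iff, Set.mem_insert_iff,
        Set.mem_singleton_iff, not_or, Perm.eq_inv_iff_eq] at hj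
      simp only [swap_apply_of_ne_of_ne hj.2 (τ.injective.ne hj.1)]
  rw [sum_pair hca.symm] at hdiff
  have hτc : τ (τ⁻¹ a) = a := by simp
  simp only [swap_apply_right, hτc, swap_apply_left, eta_self hφ] at hdiff
  simp only [footrule, Perm.mul_apply]
  linarith

lemma wtd_one_le_of_forall_apply_ne (hφ : ∀ a b, 0 ≤ φ a b) {τ : Perm (Fin n)}
    (h : ∀ a, τ a ≠ a → wtd φ τ 1 ≤ 2 * footrule φ τ - 2 * eta φ (τ⁻¹ a) a) :
    wtd φ τ 1 ≤ 2 * footrule φ τ := by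
  by_cases hτ : τ = 1
  · subst hτ
    simpa [hφ] using wtd_self_nonpos hφ 1
  · obtain ⟨a, ha⟩ : ∃ a, τ a ≠ a := by
      by_contra! h
      exact hτ (Perm.ext h)
    linarith [h a ha, eta_nonneg hφ (τ⁻¹ a) a]

lemma wtd_one_le_two_mul_footrule_sub_eta (hφ : ∀ a b, 0 ≤ φ a b) {τ : Perm (Fin n)}
    {a : Fin n} (ha : τ a ≠ a) :
    wtd φ τ 1 ≤ 2 * footrule φ τ - 2 * eta φ (τ⁻¹ a) a := by
  induction hk : #τ.support using Nat.strong_induction_on generalizing τ a with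
  | _ k ih =>
  set b := τ a
  set τ' := swap a b * τ
  have hτ' : wtd φ τ' 1 ≤ 2 * footrule φ τ' - 2 * eta φ (τ⁻¹ a) b := by
    have hsmall : #τ'.support < k := hk ▸ Perm.card_support_swap_mul ha
    have hτ'c : τ' (τ⁻¹ a) = b := by simp [τ']
    by_cases hb : τ' b = b
    · rw [τ'.injective (hτ'c.trans hb.symm), eta_self hφ, mul_zero, sub_zero]
      exact wtd_one_le_of_forall_apply_ne hφ fun _ h => ih _ hsmall h rfl
    · simpa [← hτ'c] using ih _ hsmall hb rfl
  have hprod : swap a b * τ' = τ := by simp [τ', ← mul_assoc]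
  calc wtd φ τ 1 ≤ wtd φ (swap a b) 1 + wtd φ τ' 1 := hprod ▸ wtd_one_mul_le hφ _ _
    _ ≤ 2 * eta φ a b + (2 * footrule φ τ' - 2 * eta φ (τ⁻¹ a) b) :=
        add_le_add (wtd_one_swap_le_eta hφ (Ne.symm ha)) hτ'
    _ = 2 * footrule φ τ - 2 * eta φ (τ⁻¹ a) a := by
        rw [footrule_eq_footrule_swap_mul_add hφ ha]
        ring

lemma wtd_one_le_two_mul_footrule (hφ : ∀ a b, 0 ≤ φ a b) (τ : Perm (Fin n)) :
    wtd φ τ 1 ≤ 2 * footrule φ τ :=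
  wtd_one_le_of_forall_apply_ne hφ fun _ => wtd_one_le_two_mul_footrule_sub_eta hφ

/-- for any nonnegative symmetric weight function `φ`,
`(1/2) D(π,σ) ≤ d_φ(π,σ) ≤ 2 D(π,σ)`, where `D` is the generalized Spearman footrule
built from shortest-path distances. -/
theorem stmt_9 {n : ℕ} (φ : Fin n → Fin n → ℝ) (hφ : ∀ a b, 0 ≤ φ a b)
    (hφsymm : ∀ a b, φ a b = φ b a) (π σ : Equiv.Perm (Fin n)) :
    (1 / 2) * (∑ i : Fin n, eta φ (π⁻¹ i) (σ⁻¹ i)) ≤ wtd φ π σ ∧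
    wtd φ π σ ≤ 2 * (∑ i : Fin n, eta φ (π⁻¹ i) (σ⁻¹ i)) := by
  rw [wtd_eq_wtd_one, sum_eta_inv_eq_footrule]
  exact ⟨one_half_mul_footrule_le_wtd hφ hφsymm _, wtd_one_le_two_mul_footrule hφ _⟩
end

section
/- For the weighted Kendall distance with weights w = [1,0,...,0] on S_n (only the adjacent transposition of positions 1 and 2 has nonzero weight), the distance between two permutations satisfies d_w(π,σ) = 0 if π(1) = σ(1), and otherwise d_w(π,σ) ≤ 1 (and equals 1 when π(1) ≠ σ(1) and n ≥ 2); consequently, the optimal aggregate for votes σ₁,...,σₘ places the plurality winner (the candidate appearing most often in first position) at the top. -/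
/-- The weighted Kendall distance: minimum total weight of a sequence of adjacent
transpositions transforming `σ` into `π`, where the adjacent transposition of positions
`i` and `i+1` (zero-indexed) has weight `w i`. -/
noncomputable def wk {n : ℕ} (w : ℕ → ℝ) (π σ : Equiv.Perm (Fin n)) : ℝ :=
  sInf {c | ∃ L : List (Fin n), (∀ i ∈ L, (i : ℕ) + 1 < n) ∧
    σ * (L.map fun i => Equiv.swap i ⟨((i : ℕ) + 1) % n, Nat.mod_lt _ i.pos⟩).prod = π ∧
    c = (L.map fun i => w (i : ℕ)).sum}

/-- The weights `w = [1,0,…,0]`: only the adjacent transposition of the top two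
positions costs anything. -/
noncomputable def wTop : ℕ → ℝ := fun l => if l = 0 then 1 else 0

noncomputable def adjSwap {n : ℕ} (i : Fin n) : Equiv.Perm (Fin n) :=
  Equiv.swap i ⟨((i : ℕ) + 1) % n, Nat.mod_lt _ i.pos⟩

open Equiv Equiv.Perm

lemma adjSwap_eq {n : ℕ} (i : Fin n) (h : (i : ℕ) + 1 < n) :
    adjSwap i = Equiv.swap i ⟨(i : ℕ) + 1, h⟩ := by
  unfold adjSwap
  congr 1
  exact Fin.ext (Nat.mod_eq_of_lt h)

lemma swap_decomp {n : ℕ} : ∀ (d : ℕ) (a b : Fin n), (b : ℕ) = (a : ℕ) + d + 1 →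
    ∃ L : List (Fin n), (∀ i ∈ L, (a : ℕ) ≤ (i : ℕ) ∧ (i : ℕ) + 1 ≤ (b : ℕ)) ∧
      (L.map adjSwap).prod = Equiv.swap a b := by
  intro d
  induction d with
  | zero =>
    intro a b hb
    have h : (a : ℕ) + 1 < n := by have := b.isLt; omega
    refine ⟨[a], by intro i hi; simp at hi; subst hi; omega, ?_⟩
    have hba : (⟨(a : ℕ) + 1, h⟩ : Fin n) = b := Fin.ext (by simpa using hb.symm)
    simp [adjSwap_eq a h, hba]
  | succ d ih =>
    intro a b hb
    have hlt : (a : ℕ) + d + 1 < n := by have := b.isLt; omega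
    obtain ⟨L', hL', hprod⟩ := ih a ⟨(a : ℕ) + d + 1, hlt⟩ rfl
    set b' : Fin n := ⟨(a : ℕ) + d + 1, hlt⟩ with hb'def
    have hb'v : (b' : ℕ) = (a : ℕ) + d + 1 := rfl
    have hab' : adjSwap b' = Equiv.swap b' b := by
      have h2 : (b' : ℕ) + 1 < n := by have := b.isLt; omega
      rw [adjSwap_eq b' h2]
      congr 1
      exact Fin.ext (by simp [hb'v]; omega)
    refine ⟨b' :: (L' ++ [b']), ?_, ?_⟩
    · intro i hi
      simp only [List.mem_cons, List.mem_append, List.mem_singleton] at hi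
      rcases hi with h | h | h | h
      · rw [h]; omega
      · have := hL' i h; omega
      · rw [h]; omega
      · simp at h
    · simp only [List.map_cons, List.map_append, List.map_singleton, List.prod_cons,
        List.prod_append, List.prod_singleton, hprod, hab']
      have hne1 : a ≠ b' := by
        intro h; rw [Fin.ext_iff] at h; omega
      have hne2 : a ≠ b := by
        intro h; rw [Fin.ext_iff] at h; omega
      have key : Equiv.swap ((Equiv.swap b' b) a) ((Equiv.swap b' b) b') =
          Equiv.swap b' b * Equiv.swap a b' * (Equiv.swap b' b)⁻¹ :=
        Equiv.swap_apply_apply _ _ _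
      rw [Equiv.swap_apply_of_ne_of_ne hne1 hne2, Equiv.swap_apply_left, Equiv.swap_inv] at key
      simp only [List.map_nil, List.prod_nil, mul_one]
      rw [key, mul_assoc]

/-- A swap of two nonzero elements decomposes into adjacent swaps at positive indices. -/
lemma swap_decomp_pos {n : ℕ} (a b : Fin n) (ha : (a : ℕ) ≠ 0) (hb : (b : ℕ) ≠ 0)
    (hab : a ≠ b) :
    ∃ L : List (Fin n), (∀ i ∈ L, 0 < (i : ℕ) ∧ (i : ℕ) + 1 < n) ∧
      (L.map adjSwap).prod = Equiv.swap a b := by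
  rcases lt_or_gt_of_ne (fun h : (a : ℕ) = (b : ℕ) => hab (Fin.ext h)) with h | h
  · obtain ⟨L, hL, hp⟩ := swap_decomp ((b : ℕ) - (a : ℕ) - 1) a b (by omega)
    exact ⟨L, fun i hi => by have := hL i hi; have := b.isLt; omega, hp⟩
  · obtain ⟨L, hL, hp⟩ := swap_decomp ((a : ℕ) - (b : ℕ) - 1) b a (by omega)
    exact ⟨L, fun i hi => by have := hL i hi; have := a.isLt; omega,
      by rw [hp, Equiv.swap_comm]⟩

/-- A permutation fixing `0` decomposes into adjacent swaps at positive indices. -/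
lemma fix_decomp {n : ℕ} (hn : 0 < n) (g : Equiv.Perm (Fin n)) (hg : g ⟨0, hn⟩ = ⟨0, hn⟩) :
    ∃ L : List (Fin n), (∀ i ∈ L, 0 < (i : ℕ) ∧ (i : ℕ) + 1 < n) ∧
      (L.map adjSwap).prod = g := by
  set x₀ : Fin n := ⟨0, hn⟩ with hx₀
  have h₁ : ∀ x, x ≠ x₀ ↔ g x ≠ x₀ := by
    intro x
    constructor
    · intro hx hgx
      exact hx (g.injective (hgx.trans hg.symm))
    · intro hgx hx
      exact hgx (hx ▸ hg)
  have key : ∀ h : Equiv.Perm {x : Fin n // x ≠ x₀},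
      ∃ L : List (Fin n), (∀ i ∈ L, 0 < (i : ℕ) ∧ (i : ℕ) + 1 < n) ∧
        (L.map adjSwap).prod = Equiv.Perm.ofSubtype h := by
    intro h
    refine Equiv.Perm.swap_induction_on h ⟨[], by simp, by simp⟩ ?_
    rintro f x y hxy ⟨L, hL, hp⟩
    obtain ⟨L', hL', hp'⟩ := swap_decomp_pos x.val y.val
      (fun h0 => x.prop (Fin.ext h0)) (fun h0 => y.prop (Fin.ext h0))
      (fun h0 => hxy (Subtype.ext h0))
    refine ⟨L' ++ L, ?_, ?_⟩
    · intro i hi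
      rcases List.mem_append.mp hi with h' | h'
      · exact hL' i h'
      · exact hL i h'
    · rw [List.map_append, List.prod_append, hp, hp', map_mul,
        Equiv.Perm.ofSubtype_swap_eq]
  have h₂ : ∀ x : Fin n, g x ≠ x → x ≠ x₀ := by
    intro x hx h0
    exact hx (by rw [h0, hg])
  obtain ⟨L, hL, hp⟩ := key (g.subtypePerm (fun x => (h₁ x).symm))
  exact ⟨L, hL, by rw [hp, Equiv.Perm.ofSubtype_subtypePerm (fun x => (h₁ x).symm) h₂]⟩

/-- If all indices are positive, the product of adjacent swaps fixes `0`. -/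
lemma prod_fixes {n : ℕ} (hn : 0 < n) (L : List (Fin n))
    (hL : ∀ i ∈ L, 0 < (i : ℕ) ∧ (i : ℕ) + 1 < n) :
    (L.map adjSwap).prod ⟨0, hn⟩ = ⟨0, hn⟩ := by
  induction L with
  | nil => simp
  | cons a L ih =>
    have ha := hL a List.mem_cons_self
    have ih' := ih fun i hi => hL i (List.mem_cons_of_mem a hi)
    simp only [List.map_cons, List.prod_cons, Equiv.Perm.mul_apply, ih']
    rw [adjSwap_eq a ha.2]
    apply Equiv.swap_apply_of_ne_of_ne
    · intro h
      have := congrArg Fin.val h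
      simp at this
      omega
    · intro h
      have := congrArg Fin.val h
      simp at this

/-- If the product moves `0`, some index is `0`. -/
lemma exists_zero {n : ℕ} (hn : 0 < n) (L : List (Fin n))
    (hL : ∀ i ∈ L, (i : ℕ) + 1 < n)
    (hm : (L.map adjSwap).prod ⟨0, hn⟩ ≠ ⟨0, hn⟩) :
    ∃ i ∈ L, (i : ℕ) = 0 := by
  by_contra h
  push_neg at h
  exact hm (prod_fixes hn L fun i hi => ⟨Nat.pos_of_ne_zero (h i hi), hL i hi⟩)

/-- A permutation moving `0` decomposes with exactly cost 1. -/
lemma move_decomp {n : ℕ} (hn : 0 < n) (h2 : 2 ≤ n) (g : Equiv.Perm (Fin n))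
    (hg : g ⟨0, hn⟩ ≠ ⟨0, hn⟩) :
    ∃ L : List (Fin n), (∀ i ∈ L, (i : ℕ) + 1 < n) ∧
      (L.map adjSwap).prod = g ∧ (L.map fun i : Fin n => wTop i.val).sum = 1 := by
  set x₀ : Fin n := ⟨0, hn⟩ with hx₀
  set one : Fin n := ⟨1, h2⟩ with hone
  have hne01 : x₀ ≠ one := by intro h; rw [Fin.ext_iff] at h; simp [hx₀, hone] at h
  set b₁ : Equiv.Perm (Fin n) := Equiv.swap one (g x₀) with hb₁
  have hb₁0 : b₁ x₀ = x₀ := Equiv.swap_apply_of_ne_of_ne hne01 hg.symm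
  have hb₁1 : b₁ one = g x₀ := Equiv.swap_apply_left _ _
  have hs₀ : adjSwap x₀ = Equiv.swap x₀ one := by
    rw [adjSwap_eq x₀ (by simp [hx₀]; omega)]
  set b₂ : Equiv.Perm (Fin n) := Equiv.swap x₀ one * b₁⁻¹ * g with hb₂
  have hb₂0 : b₂ x₀ = x₀ := by
    have : b₁⁻¹ (g x₀) = one := by rw [← hb₁1, Equiv.Perm.inv_def, Equiv.symm_apply_apply]
    simp only [hb₂, Equiv.Perm.mul_apply, this, Equiv.swap_apply_right]
  obtain ⟨L₁, hL₁, hp₁⟩ := fix_decomp hn b₁ hb₁0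
  obtain ⟨L₂, hL₂, hp₂⟩ := fix_decomp hn b₂ hb₂0
  refine ⟨L₁ ++ x₀ :: L₂, ?_, ?_, ?_⟩
  · intro i hi
    rcases List.mem_append.mp hi with h' | h'
    · exact (hL₁ i h').2
    · rcases List.mem_cons.mp h' with h' | h'
      · rw [h']; simp [hx₀]; omega
      · exact (hL₂ i h').2
  · rw [List.map_append, List.prod_append, List.map_cons, List.prod_cons, hp₁, hp₂, hs₀]
    have hstep : Equiv.swap x₀ one * b₂ = b₁⁻¹ * g := by
      rw [hb₂, ← mul_assoc, ← mul_assoc, Equiv.swap_mul_self, one_mul]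
    rw [hstep, mul_inv_cancel_left]
  · rw [List.map_append, List.sum_append, List.map_cons, List.sum_cons]
    have e₁ : (L₁.map fun i : Fin n => wTop i.val).sum = 0 := by
      apply List.sum_eq_zero
      intro x hx
      obtain ⟨i, hi, rfl⟩ := List.mem_map.mp hx
      simp [wTop, (hL₁ i hi).1.ne']
    have e₂ : (L₂.map fun i : Fin n => wTop i.val).sum = 0 := by
      apply List.sum_eq_zero
      intro x hx
      obtain ⟨i, hi, rfl⟩ := List.mem_map.mp hx
      simp [wTop, (hL₂ i hi).1.ne']
    rw [e₁, e₂]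
    norm_num [wTop, hx₀]

section wkLemmas

variable {n : ℕ}

/-- The defining set of `wk wTop`, in a convenient form. -/
def wkSet (π σ : Equiv.Perm (Fin n)) : Set ℝ :=
  {c | ∃ L : List (Fin n), (∀ i ∈ L, (i : ℕ) + 1 < n) ∧
    (L.map adjSwap).prod = σ⁻¹ * π ∧ c = (L.map fun i : Fin n => wTop i.val).sum}

lemma map_coe (w : ℕ → ℝ) (L : List (Fin n)) :
    (L.map fun i => w (i : ℕ)) = L.map (fun i : Fin n => w i.val) := by
  induction L with
  | nil => rfl
  | cons a L ih => simpa using ih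

lemma wk_eq_sInf_wkSet (π σ : Equiv.Perm (Fin n)) : wk wTop π σ = sInf (wkSet π σ) := by
  unfold wk wkSet
  congr 1
  ext c
  constructor <;> rintro ⟨L, h1, h2, h3⟩ <;> refine ⟨L, h1, ?_, ?_⟩
  · rw [eq_inv_mul_iff_mul_eq]
    exact h2
  · rw [h3, map_coe]
  · show σ * (L.map adjSwap).prod = π
    rw [h2, mul_inv_cancel_left]
  · rw [h3, map_coe]

lemma wkSet_nonneg (π σ : Equiv.Perm (Fin n)) : ∀ c ∈ wkSet π σ, (0 : ℝ) ≤ c := by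
  rintro c ⟨L, _, _, rfl⟩
  apply List.sum_nonneg
  intro x hx
  obtain ⟨i, _, rfl⟩ := List.mem_map.mp hx
  unfold wTop
  positivity

lemma wkSet_bddBelow (π σ : Equiv.Perm (Fin n)) : BddBelow (wkSet π σ) :=
  ⟨0, wkSet_nonneg π σ⟩

lemma zero_mem_wkSet (hn : 0 < n) (π σ : Equiv.Perm (Fin n))
    (h : π ⟨0, hn⟩ = σ ⟨0, hn⟩) : (0 : ℝ) ∈ wkSet π σ := by
  have hg : (σ⁻¹ * π) ⟨0, hn⟩ = ⟨0, hn⟩ := by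
    rw [Equiv.Perm.mul_apply, h, Equiv.Perm.inv_def, Equiv.symm_apply_apply]
  obtain ⟨L, hL, hp⟩ := fix_decomp hn (σ⁻¹ * π) hg
  refine ⟨L, fun i hi => (hL i hi).2, hp, ?_⟩
  symm
  apply List.sum_eq_zero
  intro x hx
  obtain ⟨i, hi, rfl⟩ := List.mem_map.mp hx
  simp [wTop, (hL i hi).1.ne']

lemma one_mem_wkSet (hn : 0 < n) (h2 : 2 ≤ n) (π σ : Equiv.Perm (Fin n))
    (h : π ⟨0, hn⟩ ≠ σ ⟨0, hn⟩) : (1 : ℝ) ∈ wkSet π σ := by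
  have hg : (σ⁻¹ * π) ⟨0, hn⟩ ≠ ⟨0, hn⟩ := by
    intro h0
    apply h
    have := congrArg σ h0
    rwa [← Equiv.Perm.mul_apply, mul_inv_cancel_left] at this
  obtain ⟨L, hL, hp, hs⟩ := move_decomp hn h2 (σ⁻¹ * π) hg
  exact ⟨L, hL, hp, hs.symm⟩

lemma wk_eq_zero (hn : 0 < n) (π σ : Equiv.Perm (Fin n))
    (h : π ⟨0, hn⟩ = σ ⟨0, hn⟩) : wk wTop π σ = 0 := by
  rw [wk_eq_sInf_wkSet]
  exact le_antisymm (csInf_le (wkSet_bddBelow π σ) (zero_mem_wkSet hn π σ h))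
    (le_csInf ⟨0, zero_mem_wkSet hn π σ h⟩ (wkSet_nonneg π σ))

lemma wk_eq_one (hn : 0 < n) (h2 : 2 ≤ n) (π σ : Equiv.Perm (Fin n))
    (h : π ⟨0, hn⟩ ≠ σ ⟨0, hn⟩) : wk wTop π σ = 1 := by
  rw [wk_eq_sInf_wkSet]
  refine le_antisymm (csInf_le (wkSet_bddBelow π σ) (one_mem_wkSet hn h2 π σ h)) ?_
  refine le_csInf ⟨1, one_mem_wkSet hn h2 π σ h⟩ ?_
  rintro c ⟨L, hL, hp, rfl⟩
  have hg : (L.map adjSwap).prod ⟨0, hn⟩ ≠ ⟨0, hn⟩ := by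
    rw [hp]
    intro h0
    apply h
    have := congrArg σ h0
    rwa [← Equiv.Perm.mul_apply, mul_inv_cancel_left] at this
  obtain ⟨i₀, hi₀, hz⟩ := exists_zero hn L hL hg
  have hmem : wTop i₀.val ∈ L.map fun i : Fin n => wTop i.val :=
    List.mem_map_of_mem hi₀
  have h1 : wTop i₀.val = 1 := by simp [wTop, hz]
  calc (1 : ℝ) = wTop i₀.val := h1.symm
    _ ≤ _ := List.single_le_sum (fun x hx => by
        obtain ⟨i, _, rfl⟩ := List.mem_map.mp hx
        unfold wTop; positivity) _ hmem

lemma wk_le_one (hn : 0 < n) (π σ : Equiv.Perm (Fin n)) : wk wTop π σ ≤ 1 := by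
  by_cases h : π ⟨0, hn⟩ = σ ⟨0, hn⟩
  · rw [wk_eq_zero hn π σ h]; norm_num
  · have h2 : 2 ≤ n := by
      by_contra h2
      have hn1 : n = 1 := by omega
      apply h
      have h1 := (π ⟨0, hn⟩).isLt
      have h2' := (σ ⟨0, hn⟩).isLt
      rw [Fin.ext_iff]
      omega
    rw [wk_eq_one hn h2 π σ h]

end wkLemmas

/-- for the weighted Kendall distance with weights `[1,0,…,0]`, the
distance vanishes iff the top candidates agree (and is at most `1`, with equality when
they differ and `n ≥ 2`); consequently any optimal aggregate places a plurality winner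
at the top. -/
theorem stmt_18 {n : ℕ} (hn : 0 < n) :
    (∀ π σ : Equiv.Perm (Fin n), π ⟨0, hn⟩ = σ ⟨0, hn⟩ → wk wTop π σ = 0) ∧
    (∀ π σ : Equiv.Perm (Fin n), wk wTop π σ ≤ 1) ∧
    (2 ≤ n → ∀ π σ : Equiv.Perm (Fin n), π ⟨0, hn⟩ ≠ σ ⟨0, hn⟩ → wk wTop π σ = 1) ∧
    (∀ (m : ℕ) (σ : Fin m → Equiv.Perm (Fin n)) (πstar : Equiv.Perm (Fin n)),
      (∀ π : Equiv.Perm (Fin n), ∑ l, wk wTop πstar (σ l) ≤ ∑ l, wk wTop π (σ l)) →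
      ∀ c : Fin n,
        (Finset.univ.filter fun l : Fin m => σ l ⟨0, hn⟩ = c).card ≤
          (Finset.univ.filter fun l : Fin m => σ l ⟨0, hn⟩ = πstar ⟨0, hn⟩).card) := by
  set x₀ : Fin n := ⟨0, hn⟩ with hx₀
  refine ⟨wk_eq_zero hn, wk_le_one hn, fun h2 => wk_eq_one hn h2, ?_⟩
  intro m σs πstar hopt c
  by_cases h2 : 2 ≤ n
  · have hwk : ∀ (π σ' : Equiv.Perm (Fin n)),
        wk wTop π σ' = if σ' x₀ = π x₀ then 0 else 1 := by
      intro π σ'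
      by_cases h : π x₀ = σ' x₀
      · rw [wk_eq_zero hn π σ' h, if_pos h.symm]
      · rw [wk_eq_one hn h2 π σ' h, if_neg (Ne.symm h)]
    have key : ∀ π : Equiv.Perm (Fin n),
        ∑ l, wk wTop π (σs l) =
          ((Finset.univ.filter fun l : Fin m => ¬ σs l x₀ = π x₀).card : ℝ) := by
      intro π
      rw [Finset.sum_congr rfl fun l _ => hwk π (σs l), Finset.sum_ite,
        Finset.sum_const, Finset.sum_const]
      simp
    have hcards : ∀ π : Equiv.Perm (Fin n),
        (Finset.univ.filter fun l : Fin m => σs l x₀ = π x₀).card +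
          (Finset.univ.filter fun l : Fin m => ¬ σs l x₀ = π x₀).card = m := by
      intro π
      rw [Finset.card_filter_add_card_filter_not]
      simp
    set π : Equiv.Perm (Fin n) := Equiv.swap (πstar x₀) c * πstar with hπ
    have hπc : π x₀ = c := by
      rw [hπ, Equiv.Perm.mul_apply, Equiv.swap_apply_left]
    have h1 := hopt π
    rw [key π, key πstar, Nat.cast_le] at h1
    have h2' := hcards π
    have h3' := hcards πstar
    rw [hπc] at h2' h1
    omega
  · have hn1 : n = 1 := by omega
    subst hn1
    have hc : c = πstar x₀ := Subsingleton.elim _ _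
    rw [hc]
end
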